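/- arXiv:2202.02240 — 5 statements merged into one kernel-verified Lean document; each statement's English description precedes it below -/
import Mathlib

section
/- Let σ be a nonzero finite positive Borel measure on ℝ and let s ∈ ℝ, t > 0 satisfy ∫_ℝ (1+x²)/|s+it−x|² dσ(x) ≤ 1. Then Re ∫_ℝ (1+x²)/(s+it−x)² dσ(x) < 1. -/
open MeasureTheory Complex

lemma aux_normSq (s t x : ℝ) :
    Complex.normSq ((s : ℂ) + t * Complex.I - x) = (s - x) ^ 2 + t ^ 2 := by
  have : ((s : ℂ) + t * Complex.I - x) = Complex.mk (s - x) t := by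
    apply Complex.ext <;> simp [Complex.ext_iff]
  rw [this, Complex.normSq_mk]; ring

lemma aux_ne (s t x : ℝ) (ht : 0 < t) : ((s : ℂ) + t * Complex.I - x) ≠ 0 := by
  intro h0
  have := aux_normSq s t x
  rw [h0] at this
  simp at this
  nlinarith [sq_nonneg (s - x)]

/-- If `∫ (1+x²)/|s+it−x|² dσ(x) ≤ 1` with `σ ≠ 0`, `t > 0`, then
`Re ∫ (1+x²)/(s+it−x)² dσ(x) < 1`. -/
theorem stmt4 (σ : Measure ℝ) [IsFiniteMeasure σ] (hσ : σ ≠ 0)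
    (s t : ℝ) (ht : 0 < t)
    (h : (∫ x : ℝ, (1 + x ^ 2) / ‖(s : ℂ) + t * Complex.I - x‖ ^ 2 ∂σ) ≤ 1) :
    (∫ x : ℝ, ((1 : ℂ) + (x : ℂ) ^ 2) / ((s : ℂ) + t * Complex.I - x) ^ 2 ∂σ).re < 1 := by
  set f : ℝ → ℂ := fun x => ((1 : ℂ) + (x : ℂ) ^ 2) / ((s : ℂ) + t * Complex.I - x) ^ 2 with hf
  set g : ℝ → ℝ := fun x => (1 + x ^ 2) / ‖(s : ℂ) + t * Complex.I - x‖ ^ 2 with hg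
  -- norm of f equals g
  have hnorm : ∀ x, ‖f x‖ = g x := by
    intro x
    have h1 : ((1 : ℂ) + (x : ℂ) ^ 2) = ((1 + x ^ 2 : ℝ) : ℂ) := by push_cast; ring
    simp only [hf, hg, h1, norm_div, norm_pow, Complex.norm_real,
      Real.norm_eq_abs]
    rw [abs_of_nonneg (by positivity)]
  -- g is bounded
  have hgbound : ∀ x, |g x| ≤ (1 + 2 * s ^ 2 + 2 * t ^ 2) / t ^ 2 + 2 := by
    intro x
    have hns := aux_normSq s t x
    have habs : ‖(s : ℂ) + t * Complex.I - x‖ ^ 2 = (s - x) ^ 2 + t ^ 2 := by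
      rw [Complex.sq_norm, hns]
    have hpos : (0:ℝ) < (s - x) ^ 2 + t ^ 2 := by positivity
    have ht2 : (0:ℝ) < t ^ 2 := by positivity
    rw [hg]
    simp only
    rw [habs, _root_.abs_of_nonneg (by positivity), div_le_iff₀ hpos,
      ← mul_le_mul_iff_of_pos_right ht2]
    have hC : ((1 + 2*s^2 + 2*t^2)/t^2 + 2) * ((s-x)^2 + t^2) * t^2
        = (1 + 2*s^2 + 2*t^2) * ((s-x)^2 + t^2) + 2*((s-x)^2 + t^2)*t^2 := by
      field_simp
    rw [hC]
    nlinarith [sq_nonneg (2*s - x), sq_nonneg (s - x), sq_nonneg (s*x), sq_nonneg (t*(s-x))]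
  -- measurability
  have hmf : AEStronglyMeasurable f σ := by
    apply Continuous.aestronglyMeasurable
    apply Continuous.div (by continuity) (by continuity)
    intro x
    exact pow_ne_zero 2 (aux_ne s t x ht)
  have hig : Integrable g σ := by
    refine ⟨(hmf.norm.congr ?_), ?_⟩
    · filter_upwards with x using (hnorm x)
    · apply HasFiniteIntegral.mono' (g := fun _ => (1 + 2 * s ^ 2 + 2 * t ^ 2) / t ^ 2 + 2)
        (integrable_const _).hasFiniteIntegral
      filter_upwards with x
      simpa [Real.norm_eq_abs] using hgbound x
  have hif : Integrable f σ := by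
    refine ⟨hmf, ?_⟩
    have := hig.hasFiniteIntegral
    apply HasFiniteIntegral.congr' this
    filter_upwards with x
    rw [hnorm x, Real.norm_eq_abs, _root_.abs_of_nonneg]
    have := hnorm x
    rw [← this]; exact norm_nonneg _
  -- pointwise strict: (f x).re < g x
  have hkey : ∀ x, (f x).re < g x := by
    intro x
    have hns := aux_normSq s t x
    have habs : ‖(s : ℂ) + t * Complex.I - x‖ ^ 2 = (s - x) ^ 2 + t ^ 2 := by
      rw [Complex.sq_norm, hns]
    set a := s - x with ha
    have hw0 : ((s : ℂ) + t * Complex.I - x) = Complex.mk a t := by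
      apply Complex.ext <;> simp [Complex.ext_iff, ha]
    have hw : ((s : ℂ) + t * Complex.I - x) ^ 2 = Complex.mk (a^2 - t^2) (2*a*t) := by
      rw [hw0]
      apply Complex.ext <;> simp [pow_two, Complex.mul_re, Complex.mul_im] <;> ring
    have hpos : (0:ℝ) < a ^ 2 + t ^ 2 := by positivity
    have h1 : ((1 : ℂ) + (x : ℂ) ^ 2) = ((1 + x ^ 2 : ℝ) : ℂ) := by push_cast; ring
    have hnsq : Complex.normSq (((s : ℂ) + t * Complex.I - x) ^ 2) = (a^2 + t^2)^2 := by
      rw [map_pow, hns]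
    have hre : (f x).re = (1 + x^2) * (a^2 - t^2) / ((a^2 + t^2)^2) := by
      rw [hf]
      simp only
      rw [h1, Complex.div_re, hnsq, hw]
      simp only [Complex.ofReal_re, Complex.ofReal_im]
      ring
    rw [hre, hg]
    simp only
    rw [habs]
    rw [div_lt_div_iff₀ (by positivity) hpos]
    have hmul : (0:ℝ) < (1 + x^2) * (a^2 + t^2) * (2 * t^2) := by positivity
    nlinarith [hmul]
  -- Re ∫ f = ∫ re f
  have hre_int : (∫ x, f x ∂σ).re = ∫ x, (f x).re ∂σ := (integral_re hif).symm
  have hint_lt : ∫ x, (f x).re ∂σ < ∫ x, g x ∂σ := by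
    have hif_re : Integrable (fun x => (f x).re) σ := hif.re
    have hdiff : Integrable (fun x => g x - (f x).re) σ := hig.sub hif_re
    have hpos : 0 < ∫ x, (g x - (f x).re) ∂σ := by
      rw [integral_pos_iff_support_of_nonneg]
      · have : Function.support (fun x => g x - (f x).re) = Set.univ := by
          ext x; simp only [Function.mem_support, Set.mem_univ, iff_true]
          exact sub_ne_zero_of_ne (ne_of_gt (by linarith [hkey x]))
        rw [this]
        simpa [Measure.measure_univ_eq_zero] using hσ
      · intro x; simp only [Pi.zero_apply]; linarith [hkey x]
      · exact hdiff
    have := integral_sub hig hif_re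
    rw [this] at hpos
    linarith
  calc (∫ x, f x ∂σ).re = ∫ x, (f x).re ∂σ := hre_int
    _ < ∫ x, g x ∂σ := hint_lt
    _ ≤ 1 := h
end

section
/- Let σ be a nonzero finite positive Borel measure on ℝ, c ∈ ℝ, φ(z) = c + ∫_ℝ (1+zx)/(z−x) dσ(x), H(z) = z + φ(z), and suppose s ∈ ℝ and t₀ > 0 satisfy ∫_ℝ (1+x²)/|s+it₀−x|² dσ(x) = 1 (i.e., Im H(s+it₀) = 0). Then for all t ≥ t₀, the partial derivative ∂/∂t Im H(s+it) is strictly positive. -/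
open MeasureTheory Complex Metric

lemma aux1 (s x : ℝ) {c : ℝ} (hc : 0 < c) :
    (1+x^2)/((s-x)^2+c) ≤ 2*(1+s^2)*(1+1/c) := by
  rw [div_le_iff₀ (by positivity)]
  have h1 : (1:ℝ)+x^2 ≤ 2*(1+s^2)*(1+(s-x)^2) := by nlinarith [sq_nonneg (s+(s-x)), sq_nonneg s, sq_nonneg (s-x), sq_nonneg (s*(s-x))]
  have h2 : (1:ℝ)+(s-x)^2 ≤ (1+1/c)*((s-x)^2+c) := by
    have h3 : (1/c)*c = 1 := by field_simp
    nlinarith [mul_nonneg (le_of_lt (by positivity : (0:ℝ) < 1/c)) (sq_nonneg (s-x)), hc.le, sq_nonneg (s-x)]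
  nlinarith [sq_nonneg s, sq_nonneg (s-x), hc.le]

lemma aux2 (s x : ℝ) {c : ℝ} (hc : 0 < c) :
    (1+x^2)/(((s-x)^2+c)^2) ≤ 2*(1+s^2)*(1+1/c)/c := by
  have h := aux1 s x hc
  rw [div_le_iff₀ (by positivity)] at h
  rw [div_le_div_iff₀ (by positivity) hc]
  nlinarith [sq_nonneg (s-x), hc.le, mul_nonneg (mul_nonneg (by positivity : (0:ℝ) ≤ 2*(1+s^2)*(1+1/c)) (sq_nonneg (s-x))) (sq_nonneg (s-x))]

lemma cont1 (s u : ℝ) (hu : u ≠ 0) :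
    Continuous fun x : ℝ => (1+x^2)/((s-x)^2+u^2) := by
  apply Continuous.div (by continuity) (by continuity)
  intro x; positivity

lemma int1 (σ : Measure ℝ) [IsFiniteMeasure σ] (s u : ℝ) (hu : u ≠ 0) :
    Integrable (fun x : ℝ => (1+x^2)/((s-x)^2+u^2)) σ := by
  have hc : (0:ℝ) < u^2 := by positivity
  refine (integrable_const (2*(1+s^2)*(1+1/u^2))).mono'
    (cont1 s u hu).aestronglyMeasurable ?_
  filter_upwards with x
  rw [Real.norm_of_nonneg (by positivity)]
  exact aux1 s x hc

lemma int2 (σ : Measure ℝ) [IsFiniteMeasure σ] (s u : ℝ) (hu : u ≠ 0) :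
    Integrable (fun x : ℝ => (1+x^2)/(((s-x)^2+u^2)^2)) σ := by
  have hc : (0:ℝ) < u^2 := by positivity
  have hcont : Continuous fun x : ℝ => (1+x^2)/(((s-x)^2+u^2)^2) := by
    apply Continuous.div (by continuity) (by continuity)
    intro x; positivity
  refine (integrable_const (2*(1+s^2)*(1+1/u^2)/u^2)).mono'
    hcont.aestronglyMeasurable ?_
  filter_upwards with x
  rw [Real.norm_of_nonneg (by positivity)]
  exact aux2 s x hc

-- derivative under the integral
lemma keyderiv (σ : Measure ℝ) [IsFiniteMeasure σ] (s t : ℝ) (ht : 0 < t) :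
    Integrable (fun x : ℝ => -2*t*(1+x^2)/(((s-x)^2+t^2)^2)) σ ∧
    HasDerivAt (fun u : ℝ => ∫ x : ℝ, (1+x^2)/((s-x)^2+u^2) ∂σ)
      (∫ x : ℝ, -2*t*(1+x^2)/(((s-x)^2+t^2)^2) ∂σ) t := by
  have hc : (0:ℝ) < t^2/4 := by positivity
  have h := hasDerivAt_integral_of_dominated_loc_of_deriv_le
    (F := fun (u : ℝ) (x : ℝ) => (1+x^2)/((s-x)^2+u^2))
    (F' := fun (u : ℝ) (x : ℝ) => -2*u*(1+x^2)/(((s-x)^2+u^2)^2))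
    (x₀ := t) (s := ball t (t/2)) (μ := σ)
    (bound := fun _ => 3*t*(2*(1+s^2)*(1+1/(t^2/4))/(t^2/4)))
    (ball_mem_nhds t (by positivity))
    ?_ (int1 σ s t ht.ne') ?_ ?_ (integrable_const _) ?_
  · exact ⟨h.1, h.2⟩
  · filter_upwards [eventually_gt_nhds ht] with u hu
    exact (cont1 s u hu.ne').aestronglyMeasurable
  · -- measurability of F' t
    have hcont : Continuous fun x : ℝ => -2*t*(1+x^2)/(((s-x)^2+t^2)^2) := by
      apply Continuous.div (by continuity) (by continuity)
      intro x
      have : (0:ℝ) < ((s-x)^2+t^2)^2 := by positivity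
      exact this.ne'
    exact hcont.aestronglyMeasurable
  · -- bound
    filter_upwards with x u hu
    rw [mem_ball, Real.dist_eq, abs_lt] at hu
    have hu1 : t/2 < u := by linarith
    have hu2 : u < 3*t/2 := by linarith
    have hu0 : 0 < u := by linarith
    have hden : t^2/4 ≤ u^2 := by nlinarith
    have h1 : (1+x^2)/(((s-x)^2+u^2)^2) ≤ (1+x^2)/(((s-x)^2+t^2/4)^2) := by
      gcongr <;> first | positivity | linarith
    have h2 := aux2 s x hc
    have hnorm : ‖-2*u*(1+x^2)/(((s-x)^2+u^2)^2)‖ = 2*u*((1+x^2)/(((s-x)^2+u^2)^2)) := by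
      have he : -2*u*(1+x^2)/(((s-x)^2+u^2)^2) = -(2*u*((1+x^2)/(((s-x)^2+u^2)^2))) := by ring
      rw [he, Real.norm_eq_abs, abs_neg, _root_.abs_of_nonneg (by positivity)]
    calc ‖-2*u*(1+x^2)/(((s-x)^2+u^2)^2)‖ = 2*u*((1+x^2)/(((s-x)^2+u^2)^2)) := hnorm
      _ ≤ 3*t*((1+x^2)/(((s-x)^2+t^2/4)^2)) :=
          mul_le_mul (by linarith) h1 (by positivity) (by positivity)
      _ ≤ 3*t*(2*(1+s^2)*(1+1/(t^2/4))/(t^2/4)) :=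
          mul_le_mul_of_nonneg_left h2 (by positivity)
  · -- differentiability
    filter_upwards with x u hu
    rw [mem_ball, Real.dist_eq, abs_lt] at hu
    have hu0 : 0 < u := by linarith
    have hden : (0:ℝ) < (s-x)^2+u^2 := by positivity
    have hd : HasDerivAt (fun u : ℝ => (s-x)^2+u^2) (2*u) u := by
      simpa using (hasDerivAt_id u).pow 2 |>.const_add ((s-x)^2)
    have := ((hasDerivAt_const u ((1:ℝ)+x^2)).div hd hden.ne')
    refine this.congr_deriv ?_
    ring

lemma zsub_ne (s u : ℝ) (hu : 0 < u) (x : ℝ) : ((s:ℂ) + u * Complex.I - x) ≠ 0 := by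
  intro h
  have : ((s:ℂ) + u * Complex.I - x).im = u := by simp
  rw [h] at this
  simp at this
  exact hu.ne this

lemma intC (σ : Measure ℝ) [IsFiniteMeasure σ] (s u : ℝ) (hu : 0 < u) :
    Integrable (fun x : ℝ => (1 + ((s:ℂ) + u * Complex.I) * x) / (((s:ℂ) + u * Complex.I) - x)) σ := by
  set z : ℂ := (s:ℂ) + u * Complex.I with hz
  have hne : ∀ x : ℝ, z - (x:ℂ) ≠ 0 := zsub_ne s u hu
  have heq : (fun x : ℝ => (1 + z * x) / (z - x)) =
      fun x : ℝ => -z + (1 + z^2) * (z - x)⁻¹ := by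
    funext x
    field_simp [hne x]
    ring
  rw [heq]
  refine (integrable_const (-z)).add (Integrable.const_mul ?_ _)
  have hcont : Continuous fun x : ℝ => (z - (x:ℂ))⁻¹ := by
    apply Continuous.inv₀ (by continuity) hne
  refine (integrable_const (u⁻¹)).mono' hcont.aestronglyMeasurable ?_
  filter_upwards with x
  rw [norm_inv]
  have h1 : u ≤ ‖z - (x:ℂ)‖ := by
    have : (z - (x:ℂ)).im = u := by simp [hz]
    calc u = |(z - (x:ℂ)).im| := by rw [this, abs_of_pos hu]
      _ ≤ ‖z - (x:ℂ)‖ := Complex.abs_im_le_norm _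
  exact inv_anti₀ hu h1

lemma imval (s u x : ℝ) (hu : 0 < u) :
    ((1 + ((s:ℂ) + u * Complex.I) * x) / (((s:ℂ) + u * Complex.I) - x)).im
      = (-u) * ((1+x^2)/((s-x)^2+u^2)) := by
  have hden : ((s-x)^2+u^2 : ℝ) ≠ 0 := by positivity
  have hexp : (1 + ((s:ℂ) + u * Complex.I) * x) / (((s:ℂ) + u * Complex.I) - x)
      = Complex.ofReal (((1+s*x)*(s-x)+u^2*x)/((s-x)^2+u^2))
        + Complex.ofReal ((-u)*((1+x^2)/((s-x)^2+u^2))) * Complex.I := by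
    rw [div_eq_iff (zsub_ne s u hu x)]
    rw [Complex.ext_iff]
    constructor
    · simp only [Complex.add_re, Complex.add_im, Complex.mul_re, Complex.mul_im,
        Complex.sub_re, Complex.sub_im, Complex.ofReal_re, Complex.ofReal_im,
        Complex.I_re, Complex.I_im, Complex.one_re, Complex.one_im]
      field_simp
      ring
    · simp only [Complex.add_re, Complex.add_im, Complex.mul_re, Complex.mul_im,
        Complex.sub_re, Complex.sub_im, Complex.ofReal_re, Complex.ofReal_im,
        Complex.I_re, Complex.I_im, Complex.one_re, Complex.one_im]
      field_simp
      ring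
  rw [hexp]
  simp only [Complex.add_im, Complex.mul_im, Complex.ofReal_re, Complex.ofReal_im,
    Complex.I_im, Complex.I_re]
  ring

lemma imH (σ : Measure ℝ) [IsFiniteMeasure σ] (c : ℝ) (φ H : ℂ → ℂ)
    (hφ : ∀ z : ℂ, φ z = (c : ℂ) + ∫ x : ℝ, (1 + z * x) / (z - x) ∂σ)
    (hH : ∀ z : ℂ, H z = z + φ z) (s u : ℝ) (hu : 0 < u) :
    (H ((s:ℂ) + u * Complex.I)).im
      = u - u * ∫ x : ℝ, (1+x^2)/((s-x)^2+u^2) ∂σ := by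
  rw [hH, hφ]
  have hint := intC σ s u hu
  have h2 : (∫ x : ℝ, (1 + ((s:ℂ) + u * Complex.I) * x) / (((s:ℂ) + u * Complex.I) - x) ∂σ).im
      = ∫ x : ℝ, ((1 + ((s:ℂ) + u * Complex.I) * x) / (((s:ℂ) + u * Complex.I) - x)).im ∂σ :=
    (integral_im hint).symm
  simp only [Complex.add_im, Complex.ofReal_im, Complex.mul_im, Complex.I_im, Complex.I_re,
    Complex.ofReal_re, Complex.mul_re]
  rw [h2]
  have h3 : ∫ x : ℝ, ((1 + ((s:ℂ) + u * Complex.I) * x) / (((s:ℂ) + u * Complex.I) - x)).im ∂σ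
      = ∫ x : ℝ, (-u) * ((1+x^2)/((s-x)^2+u^2)) ∂σ := by
    congr 1; funext x; exact imval s u x hu
  rw [h3, integral_const_mul]
  ring

/-- Lemma 2.1: if `∫ (1+x²)/|s+it₀−x|² dσ(x) = 1` (i.e. `Im H(s+it₀) = 0`), then
`∂/∂t Im H(s+it) > 0` for all `t ≥ t₀`. -/
theorem stmt5 (σ : Measure ℝ) [IsFiniteMeasure σ] (hσ : σ ≠ 0) (c : ℝ)
    (φ H : ℂ → ℂ)
    (hφ : ∀ z : ℂ, φ z = (c : ℂ) + ∫ x : ℝ, (1 + z * x) / (z - x) ∂σ)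
    (hH : ∀ z : ℂ, H z = z + φ z)
    (s t₀ : ℝ) (ht₀ : 0 < t₀)
    (h1 : (∫ x : ℝ, (1 + x ^ 2) / ‖(s : ℂ) + t₀ * Complex.I - x‖ ^ 2 ∂σ) = 1) :
    ∀ t : ℝ, t₀ ≤ t →
      0 < deriv (fun u : ℝ => (H ((s : ℂ) + u * Complex.I)).im) t := by
  intro t ht
  have ht0 : 0 < t := lt_of_lt_of_le ht₀ ht
  have habs : ∀ x : ℝ, (1+x^2)/((s-x)^2+t₀^2)
      = (1 + x ^ 2) / ‖(s : ℂ) + t₀ * Complex.I - x‖ ^ 2 := by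
    intro x
    congr 1
    rw [Complex.sq_norm, Complex.normSq_apply]
    simp
    ring
  have h1' : (∫ x : ℝ, (1+x^2)/((s-x)^2+t₀^2) ∂σ) = 1 := by
    simp only [habs]
    exact h1
  have hle : (∫ x : ℝ, (1+x^2)/((s-x)^2+t^2) ∂σ)
      ≤ ∫ x : ℝ, (1+x^2)/((s-x)^2+t₀^2) ∂σ := by
    apply integral_mono (int1 σ s t ht0.ne') (int1 σ s t₀ ht₀.ne')
    intro x
    have ht2 : t₀^2 ≤ t^2 := by nlinarith
    apply div_le_div_of_nonneg_left (by positivity) (by positivity)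
    linarith
  have hmono : (∫ x : ℝ, (1+x^2)/((s-x)^2+t^2) ∂σ) ≤ 1 := hle.trans_eq h1'
  obtain ⟨hint', hG⟩ := keyderiv σ s t ht0
  have hDval : (∫ x : ℝ, -2*t*(1+x^2)/(((s-x)^2+t^2)^2) ∂σ)
      = (-2*t) * ∫ x : ℝ, (1+x^2)/(((s-x)^2+t^2)^2) ∂σ := by
    rw [← integral_const_mul]
    congr 1; funext x; ring
  have hP : 0 < ∫ x : ℝ, (1+x^2)/(((s-x)^2+t^2)^2) ∂σ := by
    rw [integral_pos_iff_support_of_nonneg (fun x => by positivity) (int2 σ s t ht0.ne')]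
    have hs : (Function.support fun x : ℝ => (1+x^2)/(((s-x)^2+t^2)^2)) = Set.univ := by
      ext x
      simp only [Function.mem_support, Set.mem_univ, iff_true]
      positivity
    rw [hs]
    exact Measure.measure_univ_pos.mpr hσ
  have heq : (fun u : ℝ => (H ((s:ℂ) + u * Complex.I)).im)
      =ᶠ[nhds t] fun u : ℝ => u - u * ∫ x : ℝ, (1+x^2)/((s-x)^2+u^2) ∂σ := by
    filter_upwards [eventually_gt_nhds ht0] with u hu
    exact imH σ c φ H hφ hH s u hu
  rw [heq.deriv_eq]
  have hF : HasDerivAt (fun u : ℝ => u - u * ∫ x : ℝ, (1+x^2)/((s-x)^2+u^2) ∂σ)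
      (1 - (1 * (∫ x : ℝ, (1+x^2)/((s-x)^2+t^2) ∂σ)
        + t * ∫ x : ℝ, -2*t*(1+x^2)/(((s-x)^2+t^2)^2) ∂σ)) t :=
    (hasDerivAt_id t).sub ((hasDerivAt_id t).mul hG)
  rw [hF.deriv, hDval]
  nlinarith [mul_pos ht0 hP, mul_pos (mul_pos ht0 ht0) hP]
end

section
/- Let H be holomorphic on a connected open set D ⊂ ℂ, let f : (α−ε, α+ε) → ℝ be differentiable with graph in D, and suppose H(x+if(x)) is real for all x ∈ (α−ε, α+ε). If Im H(x+iy) > 0 for y > f(x) and Im H(x+iy) < 0 for y < f(x) on D, then H′(x+if(x)) ≠ 0 for all x ∈ (α−ε, α+ε). -/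
open Complex

set_option maxHeartbeats 1000000

lemma stmt9_angle (A : ℝ) (k : ℕ) (hk : 2 ≤ k) (c : ℂ) (hc : c ≠ 0) :
    ∃ θ : ℝ, 0 < Real.sin θ - A * Real.cos θ ∧
      (c * Complex.exp ((((k : ℝ) * θ : ℝ) : ℂ) * Complex.I)).im < 0 := by
  have hπ := Real.pi_pos
  have hk' : (2:ℝ) ≤ (k:ℝ) := by exact_mod_cast hk
  have hk0 : (0:ℝ) < (k:ℝ) := by linarith
  set φ := Real.arctan A with hφdef
  have slope : ∀ θ : ℝ, 0 < θ - φ → θ - φ < Real.pi → 0 < Real.sin θ - A * Real.cos θ := by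
    intro θ h1 h2
    have h3 : 0 < Real.sin (θ - φ) := Real.sin_pos_of_pos_of_lt_pi h1 h2
    have hsq : (0:ℝ) < Real.sqrt (1 + A ^ 2) := Real.sqrt_pos.mpr (by positivity)
    have hc' : Real.cos φ = 1 / Real.sqrt (1 + A ^ 2) := Real.cos_arctan A
    have hs' : Real.sin φ = A / Real.sqrt (1 + A ^ 2) := Real.sin_arctan A
    have hid : Real.sin (θ - φ) = Real.sin θ * Real.cos φ - Real.cos θ * Real.sin φ :=
      Real.sin_sub θ φ
    rw [hc', hs'] at hid
    have hmain : Real.sin (θ - φ) * Real.sqrt (1 + A ^ 2) = Real.sin θ - A * Real.cos θ := by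
      rw [hid]
      field_simp
    nlinarith [mul_pos h3 hsq]
  set θ₀ : ℝ := φ + Real.pi / 8 with hθ₀def
  have hexp : ∀ j : ℕ, Complex.exp ((((k:ℝ) * (θ₀ + j * (Real.pi / (2 * k))) : ℝ) : ℂ) * Complex.I)
      = Complex.exp ((((k:ℝ) * θ₀ : ℝ) : ℂ) * Complex.I) * Complex.I ^ j := by
    intro j
    have harg : ((k:ℝ) * (θ₀ + j * (Real.pi / (2 * k))) : ℝ)
        = (k:ℝ) * θ₀ + j * (Real.pi / 2) := by
      field_simp
    rw [harg]
    rw [Complex.ofReal_add, add_mul, Complex.exp_add]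
    congr 1
    have : ((j * (Real.pi / 2) : ℝ) : ℂ) * Complex.I = (j : ℂ) * (((Real.pi / 2 : ℝ) : ℂ) * Complex.I) := by
      push_cast
      ring
    rw [this, Complex.exp_nat_mul]
    congr 1
    rw [Complex.exp_mul_I, ← Complex.ofReal_cos, ← Complex.ofReal_sin,
      Real.cos_pi_div_two, Real.sin_pi_div_two]
    simp
  have hslopej : ∀ j : ℕ, j ≤ 3 →
      0 < Real.sin (θ₀ + j * (Real.pi / (2 * k))) - A * Real.cos (θ₀ + j * (Real.pi / (2 * k))) := by
    intro j hj
    have hj' : (j:ℝ) ≤ 3 := by exact_mod_cast hj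
    have hjnn : (0:ℝ) ≤ (j:ℝ) := Nat.cast_nonneg j
    apply slope
    · have : (0:ℝ) ≤ (j:ℝ) * (Real.pi / (2 * k)) := by positivity
      rw [hθ₀def]
      linarith
    · have hle : (j:ℝ) * (Real.pi / (2 * k)) ≤ 3 * (Real.pi / 4) := by
        have h1 : Real.pi / (2 * k) ≤ Real.pi / 4 := by
          apply div_le_div_of_nonneg_left (le_of_lt hπ) (by norm_num) (by linarith)
        nlinarith
      have heq : φ + Real.pi / 8 + (j:ℝ) * (Real.pi / (2 * k)) - φ
          = Real.pi / 8 + (j:ℝ) * (Real.pi / (2 * k)) := by ring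
      rw [hθ₀def, heq]
      linarith
  set w : ℂ := c * Complex.exp ((((k:ℝ) * θ₀ : ℝ) : ℂ) * Complex.I) with hwdef
  have hw : w ≠ 0 := mul_ne_zero hc (Complex.exp_ne_zero _)
  have himj : ∀ j : ℕ, (c * Complex.exp ((((k:ℝ) * (θ₀ + j * (Real.pi / (2 * k))) : ℝ) : ℂ) * Complex.I)).im
      = (w * Complex.I ^ j).im := by
    intro j
    rw [hexp j, ← mul_assoc, ← hwdef]
  by_cases h1 : w.im < 0
  · refine ⟨θ₀ + (0:ℕ) * (Real.pi / (2 * k)), hslopej 0 (by norm_num), ?_⟩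
    rw [himj 0]
    simp only [pow_zero, mul_one]
    exact h1
  by_cases h2 : w.re < 0
  · refine ⟨θ₀ + (1:ℕ) * (Real.pi / (2 * k)), hslopej 1 (by norm_num), ?_⟩
    rw [himj 1]
    rw [pow_one, Complex.mul_I_im]
    exact h2
  push_neg at h1 h2
  have hwne : 0 < w.im ∨ 0 < w.re := by
    rcases lt_or_eq_of_le h1 with h | h
    · exact Or.inl h
    rcases lt_or_eq_of_le h2 with h' | h'
    · exact Or.inr h'
    exact absurd (Complex.ext h'.symm h.symm) hw
  rcases hwne with h | h
  · refine ⟨θ₀ + (2:ℕ) * (Real.pi / (2 * k)), hslopej 2 (by norm_num), ?_⟩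
    rw [himj 2]
    rw [Complex.I_sq, mul_neg_one, Complex.neg_im]
    linarith
  · refine ⟨θ₀ + (3:ℕ) * (Real.pi / (2 * k)), hslopej 3 (by norm_num), ?_⟩
    rw [himj 3]
    have hI3 : Complex.I ^ 3 = -Complex.I := by
      rw [pow_succ, Complex.I_sq]
      ring
    rw [hI3, mul_neg, Complex.neg_im, Complex.mul_I_im]
    linarith

/-- If `Im H > 0` above the graph of `f` and `Im H < 0` below it (so that `H` is real
on the graph), then `H′` does not vanish on the graph. -/
theorem stmt9 (D : Set ℂ) (hD : IsOpen D) (hconn : IsConnected D)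
    (H : ℂ → ℂ) (hH : DifferentiableOn ℂ H D)
    (α ε : ℝ) (hε : 0 < ε) (f : ℝ → ℝ)
    (hf : ∀ x ∈ Set.Ioo (α - ε) (α + ε), DifferentiableAt ℝ f x)
    (hgraph : ∀ x ∈ Set.Ioo (α - ε) (α + ε), (x : ℂ) + f x * Complex.I ∈ D)
    (hreal : ∀ x ∈ Set.Ioo (α - ε) (α + ε), (H ((x : ℂ) + f x * Complex.I)).im = 0)
    (hpos : ∀ z ∈ D, z.re ∈ Set.Ioo (α - ε) (α + ε) → f z.re < z.im → 0 < (H z).im)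
    (hneg : ∀ z ∈ D, z.re ∈ Set.Ioo (α - ε) (α + ε) → z.im < f z.re → (H z).im < 0) :
    ∀ x ∈ Set.Ioo (α - ε) (α + ε), deriv H ((x : ℂ) + f x * Complex.I) ≠ 0 := by
  intro x₀ hx₀ hzero
  set z₀ : ℂ := (x₀ : ℂ) + f x₀ * Complex.I with hz₀def
  have hz₀D : z₀ ∈ D := hgraph x₀ hx₀
  have hre0 : z₀.re = x₀ := by simp [hz₀def]
  have him0 : z₀.im = f x₀ := by simp [hz₀def]
  have hHim0 : (H z₀).im = 0 := hreal x₀ hx₀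
  set A : ℝ := deriv f x₀ with hAdef
  have hfA : HasDerivAt f A x₀ := (hf x₀ hx₀).hasDerivAt
  -- the path in direction θ
  have htend : ∀ θ : ℝ, Filter.Tendsto (fun t : ℝ => z₀ + (t : ℂ) * Complex.exp ((θ : ℂ) * Complex.I))
      (nhdsWithin (0 : ℝ) (Set.Ioi (0:ℝ))) (nhds z₀) := by
    intro θ
    have hcont : Continuous fun t : ℝ => z₀ + (t : ℂ) * Complex.exp ((θ : ℂ) * Complex.I) := by
      fun_prop
    have h0 : Filter.Tendsto (fun t : ℝ => z₀ + (t : ℂ) * Complex.exp ((θ : ℂ) * Complex.I))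
        (nhds 0) (nhds z₀) := by simpa using hcont.tendsto 0
    exact h0.mono_left nhdsWithin_le_nhds
  have hretim : ∀ (θ t : ℝ),
      (z₀ + (t : ℂ) * Complex.exp ((θ : ℂ) * Complex.I)).re = x₀ + t * Real.cos θ ∧
      (z₀ + (t : ℂ) * Complex.exp ((θ : ℂ) * Complex.I)).im = f x₀ + t * Real.sin θ := by
    intro θ t
    constructor
    · rw [Complex.add_re, hre0, Complex.re_ofReal_mul, Complex.exp_ofReal_mul_I_re]
    · rw [Complex.add_im, him0, Complex.im_ofReal_mul, Complex.exp_ofReal_mul_I_im]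
  -- key eventual facts for directions pointing above the graph
  have key : ∀ θ : ℝ, 0 < Real.sin θ - A * Real.cos θ →
      ∀ᶠ t : ℝ in nhdsWithin (0 : ℝ) (Set.Ioi (0:ℝ)),
        (0:ℝ) < t ∧ (z₀ + (t : ℂ) * Complex.exp ((θ : ℂ) * Complex.I)) ∈ D ∧
        (z₀ + (t : ℂ) * Complex.exp ((θ : ℂ) * Complex.I)).re ∈ Set.Ioo (α - ε) (α + ε) ∧
        f ((z₀ + (t : ℂ) * Complex.exp ((θ : ℂ) * Complex.I)).re) <
          (z₀ + (t : ℂ) * Complex.exp ((θ : ℂ) * Complex.I)).im := by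
    intro θ hθ
    have hD' : ∀ᶠ t : ℝ in nhdsWithin (0 : ℝ) (Set.Ioi (0:ℝ)),
        (z₀ + (t : ℂ) * Complex.exp ((θ : ℂ) * Complex.I)) ∈ D :=
      (htend θ).eventually (hD.eventually_mem hz₀D)
    have htx : Filter.Tendsto (fun t : ℝ => x₀ + t * Real.cos θ)
        (nhdsWithin (0 : ℝ) (Set.Ioi (0:ℝ))) (nhds x₀) := by
      have hcont : Continuous fun t : ℝ => x₀ + t * Real.cos θ := by fun_prop
      have h0 : Filter.Tendsto (fun t : ℝ => x₀ + t * Real.cos θ) (nhds 0) (nhds x₀) := by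
        simpa using hcont.tendsto 0
      exact h0.mono_left nhdsWithin_le_nhds
    have hIoo : ∀ᶠ t : ℝ in nhdsWithin (0 : ℝ) (Set.Ioi (0:ℝ)),
        x₀ + t * Real.cos θ ∈ Set.Ioo (α - ε) (α + ε) :=
      htx.eventually (isOpen_Ioo.eventually_mem hx₀)
    set δ : ℝ := (Real.sin θ - A * Real.cos θ) / 2 with hδdef
    have hδ : 0 < δ := by rw [hδdef]; linarith
    have hlo := hasDerivAt_iff_isLittleO.mp hfA
    have hb := hlo.def hδ
    have hb' := htx.eventually hb
    filter_upwards [hD', hIoo, hb', self_mem_nhdsWithin] with t htD htI htb ht'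
    have ht : 0 < t := ht'
    refine ⟨ht, htD, by rw [(hretim θ t).1]; exact htI, ?_⟩
    rw [(hretim θ t).1, (hretim θ t).2]
    have htb' : |f (x₀ + t * Real.cos θ) - f x₀ - t * Real.cos θ * A| ≤ δ * (t * |Real.cos θ|) := by
      have h1 : x₀ + t * Real.cos θ - x₀ = t * Real.cos θ := by ring
      have := htb
      rw [Real.norm_eq_abs, Real.norm_eq_abs, h1, smul_eq_mul, abs_mul, abs_of_pos ht] at this
      exact this
    have habs : |Real.cos θ| ≤ 1 := Real.abs_cos_le_one θ
    have h2 := (abs_le.mp htb').2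
    have h3 : δ * (t * |Real.cos θ|) ≤ δ * t := by
      have h4 := mul_le_mul_of_nonneg_left habs (le_of_lt (mul_pos hδ ht))
      nlinarith
    nlinarith [hθ, ht]
  -- analyticity
  have hHa : AnalyticAt ℂ H z₀ := hH.analyticAt (hD.mem_nhds hz₀D)
  have hFa : AnalyticAt ℂ (fun z => H z - H z₀) z₀ := hHa.sub analyticAt_const
  rcases eq_or_ne (analyticOrderAt (fun z => H z - H z₀) z₀) ⊤ with htop | hne
  · -- H locally constant near z₀ : contradiction with hpos
    have hzeroev : ∀ᶠ z in nhds z₀, H z - H z₀ = 0 := analyticOrderAt_eq_top.mp htop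
    have hs : 0 < Real.sin (Real.pi / 2) - A * Real.cos (Real.pi / 2) := by
      rw [Real.sin_pi_div_two, Real.cos_pi_div_two]; norm_num
    obtain ⟨t, ⟨ht0, htD, htI, htg⟩, htz⟩ :=
      ((key _ hs).and ((htend (Real.pi / 2)).eventually hzeroev)).exists
    have hp := hpos _ htD htI htg
    rw [sub_eq_zero] at htz
    rw [htz, hHim0] at hp
    exact lt_irrefl 0 hp
  · obtain ⟨n, hn⟩ := WithTop.ne_top_iff_exists.mp hne
    obtain ⟨g, hg, hgz, heq⟩ := (hFa.analyticOrderAt_eq_natCast (n := n)).mp hn.symm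
    have hn0 : n ≠ 0 := by
      intro h
      subst h
      have h0 := heq.self_of_nhds
      simp only [sub_self, pow_zero, one_smul] at h0
      exact hgz h0.symm
    have hn1 : n ≠ 1 := by
      intro h
      subst h
      have hgd : HasDerivAt g (deriv g z₀) z₀ := hg.differentiableAt.hasDerivAt
      have heq' : (fun z => H z - H z₀) =ᶠ[nhds z₀] fun z => (z - z₀) * g z := by
        filter_upwards [heq] with z hz
        simpa using hz
      have h1 : HasDerivAt (fun z : ℂ => (z - z₀) * g z)
          (1 * g z₀ + (z₀ - z₀) * deriv g z₀) z₀ :=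
        ((hasDerivAt_id z₀).sub_const z₀).mul hgd
      have hd1 : deriv (fun z => H z - H z₀) z₀ = g z₀ := by
        rw [heq'.deriv_eq, h1.deriv]
        ring
      rw [deriv_sub_const, hzero] at hd1
      exact hgz hd1.symm
    have hn2 : 2 ≤ n := by omega
    obtain ⟨θ, hθs, hθim⟩ := stmt9_angle A n hn2 (g z₀) hgz
    -- continuity of the imaginary part expression
    have hgc : ContinuousAt g z₀ := hg.continuousAt
    have hT : Filter.Tendsto
        (fun t : ℝ => (g (z₀ + (t : ℂ) * Complex.exp ((θ : ℂ) * Complex.I)) *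
          Complex.exp ((((n : ℝ) * θ : ℝ) : ℂ) * Complex.I)).im)
        (nhdsWithin (0 : ℝ) (Set.Ioi (0:ℝ)))
        (nhds ((g z₀ * Complex.exp ((((n : ℝ) * θ : ℝ) : ℂ) * Complex.I)).im)) := by
      apply (Complex.continuous_im.tendsto _).comp
      exact (hgc.tendsto.comp (htend θ)).mul tendsto_const_nhds
    have hθim' : (g z₀ * Complex.exp ((((n : ℝ) * θ : ℝ) : ℂ) * Complex.I)).im < 0 := hθim
    have hEim := hT.eventually_lt_const hθim'
    obtain ⟨t, ⟨ht0, htD, htI, htg⟩, htF, htim⟩ :=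
      ((key θ hθs).and (((htend θ).eventually heq).and hEim)).exists
    have hp := hpos _ htD htI htg
    set z : ℂ := z₀ + (t : ℂ) * Complex.exp ((θ : ℂ) * Complex.I) with hzdef
    have hzsub : z - z₀ = (t : ℂ) * Complex.exp ((θ : ℂ) * Complex.I) := by
      rw [hzdef]; ring
    rw [hzsub] at htF
    have hen : ((t : ℂ) * Complex.exp ((θ : ℂ) * Complex.I)) ^ n
        = ((t ^ n : ℝ) : ℂ) * Complex.exp ((((n : ℝ) * θ : ℝ) : ℂ) * Complex.I) := by
      rw [mul_pow]
      congr 1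
      · push_cast; ring
      · rw [← Complex.exp_nat_mul]
        congr 1
        push_cast
        ring
    rw [hen, smul_eq_mul] at htF
    have him : (H z).im = t ^ n * (g z * Complex.exp ((((n : ℝ) * θ : ℝ) : ℂ) * Complex.I)).im := by
      have := congrArg Complex.im htF
      rw [Complex.sub_im, hHim0, sub_zero] at this
      rw [this, mul_assoc, Complex.im_ofReal_mul]
      congr 1
      ring_nf
    rw [him] at hp
    have htn : 0 < t ^ n := pow_pos ht0 n
    nlinarith [hp, htim, htn]
end

section
/- For a Borel probability measure μ on ℝ₊ with μ ≠ δ₀, the function η_μ(z) = ψ_μ(z)/(1+ψ_μ(z)), where ψ_μ(z) = ∫_{ℝ₊} zt/(1−zt) dμ(t), maps the upper half-plane ℍ into itself and satisfies arg η_μ(z) ≥ arg z for all z ∈ ℍ, where arg denotes the principal argument with values in (0,π). -/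
open MeasureTheory Complex

lemma stmt11_denom_ne {z : ℂ} (hz : 0 < z.im) (t : ℝ) : (1 - z * (t:ℂ)) ≠ 0 := by
  intro h
  have him := congrArg Complex.im h
  have hre := congrArg Complex.re h
  simp [Complex.sub_im, Complex.mul_im, Complex.sub_re, Complex.mul_re] at him hre
  have ht : t = 0 := by
    rcases him with h1 | h1
    · exact absurd h1 hz.ne'
    · exact h1
  rw [ht] at hre; simp at hre

lemma stmt11_key_im {z : ℂ} (hz : 0 < z.im) (t : ℝ) :
    ((starRingEnd ℂ) z * (z * t / (1 - z * t))).im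
      = z.im * Complex.normSq (z * t / (1 - z * t)) := by
  have hw := stmt11_denom_ne hz t
  have hq : (0:ℝ) < Complex.normSq (1 - z * t) := Complex.normSq_pos.2 hw
  rw [mul_div_assoc', Complex.div_im, Complex.normSq_div]
  field_simp
  simp [Complex.mul_re, Complex.mul_im, Complex.normSq_apply, Complex.sub_re,
    Complex.sub_im]
  ring

lemma stmt11_im_f {z : ℂ} (hz : 0 < z.im) (t : ℝ) :
    (z * t / (1 - z * t)).im = t * z.im / Complex.normSq (1 - z * t) := by
  have hw := stmt11_denom_ne hz t
  have hq : (0:ℝ) < Complex.normSq (1 - z * t) := Complex.normSq_pos.2 hw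
  rw [Complex.div_im]
  field_simp
  simp only [Complex.mul_re, Complex.mul_im, Complex.sub_re, Complex.sub_im, Complex.ofReal_re,
    Complex.ofReal_im, Complex.one_re, Complex.one_im]
  ring

/-- For a Borel probability measure `μ` on `ℝ₊` with `μ ≠ δ₀`, the function
`η_μ` maps the upper half-plane into itself and `arg η_μ(z) ≥ arg z` on `ℍ`. -/
theorem stmt11 (μ : Measure ℝ) [IsProbabilityMeasure μ]
    (hsupp : μ (Set.Iio 0) = 0) (hμ : μ ≠ Measure.dirac 0)
    (ψ η : ℂ → ℂ)
    (hψ : ∀ z : ℂ, ψ z = ∫ t : ℝ, z * t / (1 - z * t) ∂μ)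
    (hη : ∀ z : ℂ, η z = ψ z / (1 + ψ z)) :
    ∀ z : ℂ, 0 < z.im → 0 < (η z).im ∧ z.arg ≤ (η z).arg := by
  -- μ gives positive mass to (0, ∞)
  have hIoi : 0 < μ (Set.Ioi 0) := by
    rcases eq_or_ne (μ (Set.Ioi 0)) 0 with h0 | h0
    swap
    · exact h0.bot_lt
    · exfalso
      apply hμ
      have hcompl : μ ({(0:ℝ)}ᶜ) = 0 := by
        rw [← Set.Iio_union_Ioi]
        exact measure_union_null hsupp h0
      have h1 : μ {(0:ℝ)} = 1 := by
        have := measure_add_measure_compl (μ := μ) (measurableSet_singleton (0:ℝ))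
        rw [hcompl, add_zero, measure_univ] at this
        exact this
      ext s hs
      have hdiff : μ (s \ {0}) = 0 :=
        measure_mono_null (fun x hx => hx.2) hcompl
      have hsplit := measure_inter_add_diff (μ := μ) s (measurableSet_singleton (0:ℝ))
      rw [hdiff, add_zero] at hsplit
      by_cases h0s : (0:ℝ) ∈ s
      · have : s ∩ {0} = {0} :=
          Set.inter_eq_self_of_subset_right (Set.singleton_subset_iff.2 h0s)
        rw [Measure.dirac_apply_of_mem h0s, ← hsplit, this, h1]
      · have : s ∩ {0} = ∅ := by
          ext x; simp only [Set.mem_inter_iff, Set.mem_singleton_iff, Set.mem_empty_iff_false,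
            iff_false, not_and]
          rintro hxs rfl; exact h0s hxs
        rw [Measure.dirac_apply' _ hs, Set.indicator_of_notMem h0s, ← hsplit, this,
          measure_empty]
  have hae : ∀ᵐ t ∂μ, (0:ℝ) ≤ t := by
    rw [ae_iff]
    convert hsupp using 2
    ext t; simp [not_le]
  intro z hz
  set f : ℝ → ℂ := fun t => z * t / (1 - z * t) with hf
  have hzabs : 0 < ‖z‖ := by
    apply norm_pos_iff.mpr
    intro h; rw [h] at hz; simp at hz
  -- continuity and boundedness of f
  have hcont : Continuous f := by
    apply Continuous.div
    · continuity
    · continuity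
    · exact fun t => stmt11_denom_ne hz t
  have hbd : ∀ t : ℝ, ‖f t‖ ≤ ‖z‖ / z.im := by
    intro t
    rcases eq_or_ne t 0 with rfl | ht
    · simp [hf]
      positivity
    · have habs : |t| * z.im ≤ ‖1 - z * t‖ := by
        have h1 : |(1 - z * (t:ℝ)).im| ≤ ‖1 - z * t‖ := Complex.abs_im_le_norm _
        have h2 : |(1 - z * (t:ℝ)).im| = |t| * z.im := by
          simp [Complex.sub_im, Complex.mul_im, abs_mul, abs_of_pos hz, mul_comm]
        rw [← h2]; exact h1
      have habs' : 0 < |t| * z.im := by positivity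
      have : ‖f t‖ = ‖z‖ * |t| / ‖1 - z * t‖ := by
        simp [hf, map_div₀, map_mul]
      rw [this]
      calc ‖z‖ * |t| / ‖1 - z * t‖
          ≤ ‖z‖ * |t| / (|t| * z.im) := by
            apply div_le_div_of_nonneg_left _ habs' habs
            positivity
        _ = ‖z‖ / z.im := by
            have ht' : |t| ≠ 0 := abs_ne_zero.mpr ht
            field_simp
  have hint : Integrable f μ :=
    ⟨hcont.aestronglyMeasurable, HasFiniteIntegral.of_bounded (ae_of_all _ hbd)⟩
  have hintN : Integrable (fun t => Complex.normSq (f t)) μ := by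
    refine ⟨(Complex.continuous_normSq.comp hcont).aestronglyMeasurable,
      HasFiniteIntegral.of_bounded (C := (‖z‖ / z.im)^2) (ae_of_all _ ?_)⟩
    intro t
    rw [Real.norm_eq_abs, _root_.abs_of_nonneg (Complex.normSq_nonneg _), ← Complex.sq_norm]
    have h1 := hbd t
    have h0 : (0:ℝ) ≤ ‖f t‖ := norm_nonneg _
    nlinarith
  -- Cauchy-Schwarz : (∫ ‖f‖)² ≤ ∫ normSq f
  set m : ℝ := ∫ t, ‖f t‖ ∂μ with hm
  have hg : Integrable (fun t => ‖f t‖) μ := hint.norm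
  have hsqeq : (fun t : ℝ => ‖f t‖^2) = fun t => Complex.normSq (f t) := by
    funext t; rw [Complex.sq_norm]
  have hg2 : Integrable (fun t => ‖f t‖^2) μ := by rw [hsqeq]; exact hintN
  have hCS : m^2 ≤ ∫ t, Complex.normSq (f t) ∂μ := by
    have h0 : 0 ≤ ∫ t, (‖f t‖ - m)^2 ∂μ := integral_nonneg fun t => sq_nonneg _
    have heq : (fun t : ℝ => (‖f t‖ - m)^2)
        = fun t => (‖f t‖^2 - (2*m)*‖f t‖) + m^2 := by
      funext t; ring
    have e1 : ∫ t, ((‖f t‖^2 - (2*m)*‖f t‖) + m^2) ∂μ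
        = (∫ t, (‖f t‖^2 - (2*m)*‖f t‖) ∂μ) + ∫ _t : ℝ, m^2 ∂μ :=
      integral_add (hg2.sub (hg.const_mul (2*m))) (integrable_const _)
    have e2 : ∫ t, (‖f t‖^2 - (2*m)*‖f t‖) ∂μ
        = (∫ t, ‖f t‖^2 ∂μ) - ∫ t, (2*m)*‖f t‖ ∂μ := integral_sub hg2 (hg.const_mul _)
    have e3 : ∫ t, (2*m)*‖f t‖ ∂μ = (2*m) * m := by rw [integral_const_mul]
    have e4 : ∫ _t : ℝ, m^2 ∂μ = m^2 := by simp
    rw [heq, e1, e2, e3, e4] at h0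
    rw [hsqeq] at h0
    nlinarith
  -- main integral identities
  have hψz : ψ z = ∫ t, f t ∂μ := hψ z
  have hm0 : 0 ≤ m := integral_nonneg fun t => norm_nonneg _
  have hnormle : Complex.normSq (ψ z) ≤ ∫ t, Complex.normSq (f t) ∂μ := by
    have h1 : ‖ψ z‖ ≤ m := by rw [hψz]; exact norm_integral_le_integral_norm _
    have h2 : Complex.normSq (ψ z) = ‖ψ z‖^2 := by
      rw [Complex.sq_norm]
    have h3 : 0 ≤ ‖ψ z‖ := norm_nonneg _
    nlinarith
  have hkeyineq : z.im * Complex.normSq (ψ z) ≤ ((starRingEnd ℂ) z * ψ z).im := by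
    have h1 : ((starRingEnd ℂ) z * ψ z).im = ∫ t, ((starRingEnd ℂ) z * f t).im ∂μ := by
      rw [hψz, ← integral_const_mul]
      exact (integral_im (hint.const_mul _)).symm
    have h2 : ∫ t, ((starRingEnd ℂ) z * f t).im ∂μ
        = ∫ t, z.im * Complex.normSq (f t) ∂μ :=
      integral_congr_ae (Filter.Eventually.of_forall fun t => stmt11_key_im hz t)
    rw [h1, h2, integral_const_mul]
    have := mul_le_mul_of_nonneg_left hnormle hz.le
    linarith
  have himpos : 0 < (ψ z).im := by
    have h1 : (ψ z).im = ∫ t, (f t).im ∂μ := by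
      rw [hψz]; exact (integral_im hint).symm
    rw [h1]
    have hnn : 0 ≤ᵐ[μ] fun t => (f t).im := by
      filter_upwards [hae] with t ht
      rw [show f t = z * t / (1 - z * t) from rfl, stmt11_im_f hz t]
      exact div_nonneg (mul_nonneg ht hz.le) (Complex.normSq_nonneg _)
    have hintim : Integrable (fun t => (f t).im) μ := hint.im
    refine (integral_pos_iff_support_of_nonneg_ae hnn hintim).2 ?_
    refine lt_of_lt_of_le hIoi (measure_mono ?_)
    intro t ht
    simp only [Function.mem_support]
    have : (0:ℝ) < t * z.im / Complex.normSq (1 - z * t) :=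
      div_pos (mul_pos ht hz) (Complex.normSq_pos.2 (stmt11_denom_ne hz t))
    rw [show f t = z * t / (1 - z * t) from rfl, stmt11_im_f hz t]
    exact this.ne'
  have h1p : (1 + ψ z) ≠ 0 := by
    intro h
    have := congrArg Complex.im h
    simp at this
    linarith
  have hq : 0 < Complex.normSq (1 + ψ z) := Complex.normSq_pos.2 h1p
  have heta_im : (η z).im = (ψ z).im / Complex.normSq (1 + ψ z) := by
    rw [hη z, Complex.div_im, div_sub_div_same]
    congr 1
    simp [Complex.add_re, Complex.add_im]
    ring
  have himeta : 0 < (η z).im := by rw [heta_im]; exact div_pos himpos hq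
  refine ⟨himeta, ?_⟩
  -- the argument inequality
  have hconj_eta : 0 ≤ ((starRingEnd ℂ) z * η z).im := by
    rw [hη z, mul_div_assoc', Complex.div_im, div_sub_div_same]
    have hnum : ((starRingEnd ℂ) z * ψ z).im * (1 + ψ z).re
        - ((starRingEnd ℂ) z * ψ z).re * (1 + ψ z).im
        = ((starRingEnd ℂ) z * ψ z).im - z.im * Complex.normSq (ψ z) := by
      simp [Complex.mul_re, Complex.mul_im, Complex.add_re, Complex.add_im,
        Complex.normSq_apply]
      ring
    rw [hnum]
    exact div_nonneg (by linarith) hq.le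
  have hz0 : z ≠ 0 := by intro h; rw [h] at hz; simp at hz
  have hη0 : η z ≠ 0 := by
    intro h; rw [h] at himeta; simp at himeta
  have habsη : 0 < ‖η z‖ := norm_pos_iff.mpr hη0
  by_contra hc
  push_neg at hc
  set a := z.arg with hadef
  set b := (η z).arg with hbdef
  have hb_pos : 0 < b := by
    rcases lt_or_eq_of_le (Complex.arg_nonneg_iff.2 himeta.le) with h | h
    · exact h
    · exfalso
      have := (Complex.arg_eq_zero_iff.1 h.symm).2
      linarith
  have ha_le : a ≤ Real.pi := Complex.arg_le_pi z
  have h1 : 0 < a - b := by linarith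
  have h2 : a - b < Real.pi := by linarith
  have hs : 0 < Real.sin (a - b) := Real.sin_pos_of_pos_of_lt_pi h1 h2
  have hzre : z.re = ‖z‖ * Real.cos a := by
    rw [Complex.cos_arg hz0]; field_simp
  have hzim : z.im = ‖z‖ * Real.sin a := by
    rw [Complex.sin_arg]; field_simp
  have hbre : (η z).re = ‖η z‖ * Real.cos b := by
    rw [Complex.cos_arg hη0]; field_simp
  have hbim : (η z).im = ‖η z‖ * Real.sin b := by
    rw [Complex.sin_arg]; field_simp
  have hmulim : ((starRingEnd ℂ) z * η z).im = z.re * (η z).im - z.im * (η z).re := by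
    simp [Complex.mul_im]
    ring
  have hkey : z.re * (η z).im - z.im * (η z).re
      = -(‖z‖ * ‖η z‖ * Real.sin (a - b)) := by
    rw [hzre, hzim, hbre, hbim, Real.sin_sub]; ring
  rw [hmulim, hkey] at hconj_eta
  nlinarith [mul_pos (mul_pos hzabs habsη) hs]
end

section
/- Let μ be a Borel probability measure on ℝ and suppose the functions F_{μ_n} converge to F_μ uniformly on a compact set of the form H(∂Q) where H is a holomorphic injection of a closed rectangle Q ⊂ ℍ. If H_n → H uniformly on a neighborhood of Q, H_n is injective on Q with F_n ∘ H_n = id, and z lies in the open region H(int Q), then for large n, F_n(z) = (1/2πi) ∮_{∂Q} ζ H_n′(ζ)/(H_n(ζ)−z) dζ. -/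
open MeasureTheory Complex intervalIntegral Set Metric Filter
open scoped Topology


private lemma log_sub_log_neg {ζ : ℂ} (h : 0 < ζ.im) :
    Complex.log ζ - Complex.log (-ζ) = Real.pi * Complex.I := by
  have hζ : ζ ≠ 0 := fun h0 => by simp [h0] at h
  apply Complex.ext
  · simp [Complex.sub_re, Complex.log_re, map_neg]
  · simp [Complex.sub_im, Complex.log_im, Complex.arg_neg_eq_arg_sub_pi_of_im_pos h]

private lemma rect_winding {a b c d : ℝ} {w : ℂ} (ha : a < w.re) (hb : w.re < b)
    (hc : c < w.im) (hd : w.im < d) :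
    ((∫ x : ℝ in a..b, ((x:ℂ) + (c:ℂ)*Complex.I - w)⁻¹)
      - (∫ x : ℝ in a..b, ((x:ℂ) + (d:ℂ)*Complex.I - w)⁻¹))
      + Complex.I * (∫ y : ℝ in c..d, ((b:ℂ) + (y:ℂ)*Complex.I - w)⁻¹)
      - Complex.I * (∫ y : ℝ in c..d, ((a:ℂ) + (y:ℂ)*Complex.I - w)⁻¹)
      = 2 * Real.pi * Complex.I := by
  -- horizontal segments
  have horiz : ∀ e : ℝ, e ≠ w.im →
      (∫ x : ℝ in a..b, ((x:ℂ) + (e:ℂ)*Complex.I - w)⁻¹)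
        = Complex.log ((b:ℂ) + (e:ℂ)*Complex.I - w) - Complex.log ((a:ℂ) + (e:ℂ)*Complex.I - w) := by
    intro e he
    have hne : ∀ x : ℝ, (x:ℂ) + (e:ℂ)*Complex.I - w ≠ 0 := by
      intro x h0
      have := congrArg Complex.im h0
      simp at this; exact he (by linarith)
    apply intervalIntegral.integral_eq_sub_of_hasDerivAt
    · intro x _
      have h1 : HasDerivAt (fun ζ : ℂ => ζ + (e:ℂ)*Complex.I - w) 1 (x:ℂ) :=
        ((hasDerivAt_id _).add_const _).sub_const _
      have h2 : HasDerivAt (fun x : ℝ => (x:ℂ) + (e:ℂ)*Complex.I - w) 1 x := h1.comp_ofReal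
      have h3 := h2.clog_real (by
        rw [Complex.mem_slitPlane_iff]
        right
        intro h0
        have h0' : ((x:ℂ) + (e:ℂ)*Complex.I - w).im = e - w.im := by simp
        exact he (by rw [h0] at h0'; linarith [h0'.symm] ))
      simpa using h3
    · have hcont : Continuous fun x : ℝ => ((x:ℂ) + (e:ℂ)*Complex.I - w)⁻¹ :=
        Continuous.inv₀ ((Complex.continuous_ofReal.add continuous_const).sub continuous_const) hne
      exact hcont.intervalIntegrable _ _
  -- vertical segments
  have vertR : Complex.I * (∫ y : ℝ in c..d, ((b:ℂ) + (y:ℂ)*Complex.I - w)⁻¹)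
      = Complex.log ((b:ℂ) + (d:ℂ)*Complex.I - w) - Complex.log ((b:ℂ) + (c:ℂ)*Complex.I - w) := by
    rw [← intervalIntegral.integral_const_mul]
    apply intervalIntegral.integral_eq_sub_of_hasDerivAt
    · intro y _
      have h1 : HasDerivAt (fun ζ : ℂ => (b:ℂ) + ζ*Complex.I - w) Complex.I (y:ℂ) := by
        simpa using (((hasDerivAt_id ((y:ℝ):ℂ)).mul_const Complex.I).const_add (b:ℂ)).sub_const w
      have h2 := h1.comp_ofReal
      have h3 := h2.clog_real (by
        rw [Complex.mem_slitPlane_iff]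
        left
        have : ((b:ℂ) + (y:ℂ)*Complex.I - w).re = b - w.re := by simp
        rw [this]; linarith)
      have h4 : Complex.I / ((b:ℂ) + (y:ℂ)*Complex.I - w)
          = Complex.I * ((b:ℂ) + (y:ℂ)*Complex.I - w)⁻¹ := div_eq_mul_inv _ _
      rw [h4] at h3
      exact h3
    · have hne : ∀ y : ℝ, (b:ℂ) + (y:ℂ)*Complex.I - w ≠ 0 := by
        intro y h0
        have := congrArg Complex.re h0
        simp at this; linarith
      have hcont : Continuous fun y : ℝ => Complex.I * ((b:ℂ) + (y:ℂ)*Complex.I - w)⁻¹ :=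
        continuous_const.mul (Continuous.inv₀
          ((continuous_const.add (Complex.continuous_ofReal.mul continuous_const)).sub
            continuous_const) hne)
      exact hcont.intervalIntegrable _ _
  have vertL : Complex.I * (∫ y : ℝ in c..d, ((a:ℂ) + (y:ℂ)*Complex.I - w)⁻¹)
      = Complex.log (w - ((a:ℂ) + (d:ℂ)*Complex.I)) - Complex.log (w - ((a:ℂ) + (c:ℂ)*Complex.I)) := by
    rw [← intervalIntegral.integral_const_mul]
    apply intervalIntegral.integral_eq_sub_of_hasDerivAt
    · intro y _
      have h1 : HasDerivAt (fun ζ : ℂ => w - ((a:ℂ) + ζ*Complex.I)) (-Complex.I) (y:ℂ) := by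
        simpa using (((hasDerivAt_id ((y:ℝ):ℂ)).mul_const Complex.I).const_add (a:ℂ)).const_sub w
      have h2 := h1.comp_ofReal
      have h3 := h2.clog_real (by
        rw [Complex.mem_slitPlane_iff]
        left
        have : (w - ((a:ℂ) + (y:ℂ)*Complex.I)).re = w.re - a := by simp
        rw [this]; linarith)
      have hne : w - ((a:ℂ) + (y:ℂ)*Complex.I) ≠ 0 := by
        intro h0
        have := congrArg Complex.re h0
        simp at this; linarith
      have h4 : -Complex.I / (w - ((a:ℂ) + (y:ℂ)*Complex.I))
          = Complex.I * ((a:ℂ) + (y:ℂ)*Complex.I - w)⁻¹ := by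
        rw [div_eq_mul_inv, ← neg_sub ((a:ℂ) + (y:ℂ)*Complex.I) w, inv_neg]
        ring
      rw [h4] at h3
      exact h3
    · have hne : ∀ y : ℝ, (a:ℂ) + (y:ℂ)*Complex.I - w ≠ 0 := by
        intro y h0
        have := congrArg Complex.re h0
        simp at this; linarith
      have hcont : Continuous fun y : ℝ => Complex.I * ((a:ℂ) + (y:ℂ)*Complex.I - w)⁻¹ :=
        continuous_const.mul (Continuous.inv₀
          ((continuous_const.add (Complex.continuous_ofReal.mul continuous_const)).sub
            continuous_const) hne)
      exact hcont.intervalIntegrable _ _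
  rw [horiz c (by linarith), horiz d (by linarith), vertR, vertL]
  have e1 : Complex.log ((a:ℂ) + (d:ℂ)*Complex.I - w) - Complex.log (w - ((a:ℂ) + (d:ℂ)*Complex.I))
      = Real.pi * Complex.I := by
    rw [← neg_sub ((a:ℂ) + (d:ℂ)*Complex.I) w]
    exact log_sub_log_neg (by simp; linarith)
  have e2 : Complex.log (w - ((a:ℂ) + (c:ℂ)*Complex.I)) - Complex.log ((a:ℂ) + (c:ℂ)*Complex.I - w)
      = Real.pi * Complex.I := by
    rw [← neg_sub w ((a:ℂ) + (c:ℂ)*Complex.I)]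
    exact log_sub_log_neg (by simp; linarith)
  linear_combination e1 + e2



private lemma deriv_ne_zero_of_injOn {f : ℂ → ℂ} {V : Set ℂ} (hV : IsOpen V)
    (hf : DifferentiableOn ℂ f V) (hinj : Set.InjOn f V) {w : ℂ} (hw : w ∈ V) :
    deriv f w ≠ 0 := by
  intro hd0
  obtain ⟨r, hr0, hrV⟩ : ∃ r > 0, ball w r ⊆ V := Metric.isOpen_iff.mp hV w hw
  set g : ℂ → ℂ := fun ζ => f ζ - f w with hgdef
  have hga : AnalyticAt ℂ g w := ((hf.analyticOnNhd hV) w hw).sub analyticAt_const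
  have hg0 : g w = 0 := sub_self _
  have hgd : deriv g w = 0 := by
    have : deriv g w = deriv f w := deriv_sub_const _
    rw [this, hd0]
  -- `g` is not eventually zero near `w`
  have hne : ¬ (∀ᶠ z in 𝓝 w, g z = 0) := by
    intro h
    obtain ⟨ε, hε0, hεz⟩ := Metric.eventually_nhds_iff.mp h
    set t := min (ε/2) (r/2) with ht
    have ht0 : 0 < t := lt_min (by linarith) (by linarith)
    have hdist : dist (w + (t:ℂ)) w = t := by
      simp [dist_eq_norm, add_sub_cancel_left, Complex.norm_real, abs_of_pos ht0]
    have h1 : g (w + (t:ℂ)) = 0 := hεz (by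
      rw [hdist]; exact lt_of_le_of_lt (min_le_left _ _) (by linarith))
    have h2 : w + (t:ℂ) ∈ V := hrV (by
      simp only [mem_ball, hdist]; exact lt_of_le_of_lt (min_le_right _ _) (by linarith))
    have h3 : f (w + (t:ℂ)) = f w := by
      have := h1; simp only [hgdef, sub_eq_zero] at this; exact this
    have h4 : w + (t:ℂ) = w := hinj h2 hw h3
    have : (t:ℂ) = 0 := by linear_combination h4
    exact ht0.ne' (by exact_mod_cast this)
  -- vanishing order of `g` at `w`
  have hordtop : analyticOrderAt g w ≠ ⊤ := fun h => hne (analyticOrderAt_eq_top.mp h)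
  set m : ℕ := (analyticOrderAt g w).toNat with hm
  have hordm : analyticOrderAt g w = (m : ℕ∞) := (ENat.coe_toNat hordtop).symm
  obtain ⟨h, hh, hh0, hfac⟩ := (hga.analyticOrderAt_eq_natCast (n := m)).mp hordm
  -- m ≠ 0
  have hm0 : m ≠ 0 := by
    intro h0
    have := hfac.self_of_nhds
    rw [h0] at this
    simp only [pow_zero, one_smul, hg0] at this
    exact hh0 this.symm
  -- m ≠ 1
  have hm1 : m ≠ 1 := by
    intro h1
    have hev : g =ᶠ[𝓝 w] fun z => (z - w) * h z := by
      filter_upwards [hfac] with z hz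
      rw [hz, h1, pow_one, smul_eq_mul]
    have hD : HasDerivAt (fun z => (z - w) * h z) ((1 : ℂ) * h w + (w - w) * deriv h w) w :=
      ((hasDerivAt_id w).sub_const w).mul hh.differentiableAt.hasDerivAt
    have : deriv g w = h w := by
      rw [hev.deriv_eq, hD.deriv]; ring
    rw [hgd] at this
    exact hh0 this.symm
  have hm2 : 2 ≤ m := by omega
  -- an m-th root of h w
  set c : ℂ := Complex.exp (Complex.log (h w) / m) with hc
  have hcm : c ^ m = h w := by
    rw [hc, ← Complex.exp_nat_mul]
    rw [mul_div_cancel₀ _ (by exact_mod_cast hm0 : (m:ℂ) ≠ 0)]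
    exact Complex.exp_log hh0
  have hc0 : c ≠ 0 := Complex.exp_ne_zero _
  -- the m-th root function φ and ψ = (ζ - w) φ ζ
  set φ : ℂ → ℂ := fun ζ => c * Complex.exp ((m:ℂ)⁻¹ * Complex.log (h ζ / h w)) with hφ
  have hφa : AnalyticAt ℂ φ w := by
    apply analyticAt_const.mul
    apply AnalyticAt.cexp
    apply analyticAt_const.mul
    apply AnalyticAt.clog (hh.div analyticAt_const hh0)
    rw [show ((h / fun _ => h w : ℂ → ℂ)) w = h w / h w from rfl, div_self hh0]
    rw [Complex.mem_slitPlane_iff]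
    left; norm_num
  have hφw : φ w = c := by
    show c * Complex.exp ((m:ℂ)⁻¹ * Complex.log (h w / h w)) = c
    rw [div_self hh0, Complex.log_one, mul_zero, Complex.exp_zero, mul_one]
  set ψ : ℂ → ℂ := fun ζ => (ζ - w) * φ ζ with hψ
  obtain ⟨pφ, hpφ⟩ := hφa
  have hφs : HasStrictDerivAt φ (pφ 1 fun _ => 1) w := hpφ.hasStrictDerivAt
  have hψs : HasStrictDerivAt ψ c w := by
    have hsub : HasStrictDerivAt (fun y : ℂ => y - w) (1 - 0) w :=
      HasStrictDerivAt.sub (hasStrictDerivAt_id w) (hasStrictDerivAt_const w w)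
    rw [sub_zero] at hsub
    have h' : HasStrictDerivAt (fun y => (y - w) * φ y)
        (1 * φ w + (w - w) * (pφ 1 fun _ => 1)) w :=
      HasStrictDerivAt.mul hsub hφs
    have hval : (1 : ℂ) * φ w + (w - w) * (pφ 1 fun _ => 1) = c := by simp [hφw]
    rw [hval] at h'
    exact h'
  have hψw : ψ w = 0 := by simp [hψ]
  -- eventually, g = ψ ^ m
  have hmC : (m:ℂ) ≠ 0 := by exact_mod_cast hm0
  have hev : ∀ᶠ ζ in 𝓝 w, g ζ = ψ ζ ^ m := by
    filter_upwards [hfac, hh.continuousAt.eventually_ne hh0] with ζ hζ hζ0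
    have hφm : φ ζ ^ m = h ζ := by
      show (c * Complex.exp ((m:ℂ)⁻¹ * Complex.log (h ζ / h w))) ^ m = h ζ
      rw [mul_pow, hcm, ← Complex.exp_nat_mul, ← mul_assoc, mul_inv_cancel₀ hmC, one_mul,
        Complex.exp_log (div_ne_zero hζ0 hh0), mul_comm, div_mul_cancel₀ _ hh0]
    rw [hζ, smul_eq_mul]
    show (ζ - w) ^ m * h ζ = ((ζ - w) * φ ζ) ^ m
    rw [mul_pow, hφm]
  -- the root of unity
  set ω : ℂ := Complex.exp (2 * Real.pi * Complex.I / m) with hω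
  have hωm : ω ^ m = 1 := by
    rw [hω, ← Complex.exp_nat_mul,
      mul_div_cancel₀ _ (by exact_mod_cast hm0 : (m:ℂ) ≠ 0), Complex.exp_two_pi_mul_I]
  have hω1 : ω ≠ 1 := by
    show Complex.exp (2 * Real.pi * Complex.I / m) ≠ 1
    rw [Ne, Complex.exp_eq_one_iff]
    push_neg
    intro n hn
    have hπ : (2 * (Real.pi:ℂ) * Complex.I) ≠ 0 := by
      simp [Real.pi_ne_zero, Complex.I_ne_zero, Complex.ofReal_ne_zero]
    field_simp [hmC] at hn
    have h2 : (1:ℂ) * (2 * (Real.pi:ℂ) * Complex.I) = ((n:ℂ) * m) * (2 * (Real.pi:ℂ) * Complex.I) := by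
      rw [one_mul]; linear_combination (2 * (Real.pi:ℂ) * Complex.I) * hn
    have h3 : (1:ℂ) = (n:ℂ) * m := mul_right_cancel₀ hπ h2
    have hre : (1:ℝ) = (n:ℝ) * m := by exact_mod_cast h3
    have hm2' : (2:ℝ) ≤ (m:ℝ) := by exact_mod_cast hm2
    rcases le_or_gt (n:ℝ) 0 with hn0 | hn0
    · nlinarith
    · have hIn : (0:ℤ) < n := by exact_mod_cast hn0
      have h1n' : (1:ℤ) ≤ n := by omega
      have h1n : (1:ℝ) ≤ (n:ℝ) := by exact_mod_cast h1n'
      nlinarith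
  -- local inverse of ψ
  set ι : ℂ → ℂ := HasStrictDerivAt.localInverse ψ c w hψs hc0 with hι
  have hri : ∀ᶠ y in 𝓝 (ψ w), ψ (ι y) = y :=
    (hψs.hasStrictFDerivAt_equiv hc0).eventually_right_inverse
  have hcontι : ContinuousAt ι (ψ w) :=
    (hψs.hasStrictFDerivAt_equiv hc0).localInverse_continuousAt
  rw [hψw] at hri hcontι
  -- the good neighborhood
  have hS : ∀ᶠ ζ in 𝓝 w, ζ ∈ ball w r ∧ g ζ = ψ ζ ^ m := by
    filter_upwards [isOpen_ball.mem_nhds (mem_ball_self hr0), hev] with ζ h1 h2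
    exact ⟨h1, h2⟩
  have hι0 : ι 0 = w := by
    have := (hψs.hasStrictFDerivAt_equiv hc0).localInverse_apply_image
    rwa [hψw] at this
  have htend : Tendsto ι (𝓝 0) (𝓝 w) := by
    have := hcontι.tendsto
    rwa [hι0] at this
  have htendω : Tendsto (fun t : ℂ => ι (ω * t)) (𝓝 0) (𝓝 w) := by
    apply htend.comp
    have : Tendsto (fun t : ℂ => ω * t) (𝓝 0) (𝓝 (ω * 0)) :=
      (continuous_const.mul continuous_id).tendsto 0
    simpa using this
  have hωconv : Tendsto (fun t : ℂ => ω * t) (𝓝 0) (𝓝 0) := by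
    have : Tendsto (fun t : ℂ => ω * t) (𝓝 0) (𝓝 (ω * 0)) :=
      (continuous_const.mul continuous_id).tendsto 0
    simpa using this
  -- the contradiction, for t small, t ≠ 0
  have key : ∀ᶠ t : ℂ in 𝓝[≠] (0:ℂ), False := by
    have e1 : ∀ᶠ t : ℂ in 𝓝 0, ψ (ι t) = t := hri
    have e2 : ∀ᶠ t : ℂ in 𝓝 0, ψ (ι (ω * t)) = ω * t := hωconv.eventually hri
    have e3 : ∀ᶠ t : ℂ in 𝓝 0, ι t ∈ ball w r ∧ g (ι t) = ψ (ι t) ^ m := htend.eventually hS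
    have e4 : ∀ᶠ t : ℂ in 𝓝 0, ι (ω * t) ∈ ball w r ∧ g (ι (ω * t)) = ψ (ι (ω * t)) ^ m :=
      htendω.eventually hS
    have e5 : ∀ᶠ t : ℂ in 𝓝[≠] (0:ℂ), t ≠ 0 := eventually_mem_nhdsWithin
    filter_upwards [e1.filter_mono nhdsWithin_le_nhds, e2.filter_mono nhdsWithin_le_nhds,
      e3.filter_mono nhdsWithin_le_nhds, e4.filter_mono nhdsWithin_le_nhds, e5] with
      t h1 h2 ⟨h3, h3'⟩ ⟨h4, h4'⟩ h5
    have hgt : g (ι t) = t ^ m := by rw [h3', h1]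
    have hgωt : g (ι (ω * t)) = t ^ m := by
      rw [h4', h2, mul_pow, hωm, one_mul]
    have hfeq : f (ι t) = f (ι (ω * t)) := by
      have := hgt.trans hgωt.symm
      simp only [hgdef] at this
      linear_combination this
    have hVι : ι t ∈ V := hrV h3
    have hVιω : ι (ω * t) ∈ V := hrV h4
    have heq : ι t = ι (ω * t) := hinj hVι hVιω hfeq
    have : t = ω * t := by
      conv_lhs => rw [← h1, heq]
      exact h2
    have hcontra : (ω - 1) * t = 0 := by linear_combination this.symm
    rcases mul_eq_zero.mp hcontra with h | h
    · exact hω1 (by linear_combination h)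
    · exact h5 h
  obtain ⟨t, ht⟩ := key.exists
  exact ht

private lemma contour_eval {a b c d : ℝ} {U : Set ℂ} (hU : IsOpen U)
    (hQU : Set.Icc a b ×ℂ Set.Icc c d ⊆ U)
    {f : ℂ → ℂ} (hf : DifferentiableOn ℂ f U)
    (hinj : Set.InjOn f (Set.Icc a b ×ℂ Set.Icc c d))
    {z wn : ℂ} (hwn : wn ∈ Set.Ioo a b ×ℂ Set.Ioo c d) (hfwn : f wn = z)
    (hderiv : deriv f wn ≠ 0) :
    (∫ x : ℝ in a..b, ((x : ℂ) + c * Complex.I) * deriv f ((x : ℂ) + c * Complex.I) /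
        (f ((x : ℂ) + c * Complex.I) - z))
      + (∫ y : ℝ in c..d, ((b : ℂ) + y * Complex.I) * deriv f ((b : ℂ) + y * Complex.I) /
          (f ((b : ℂ) + y * Complex.I) - z) * Complex.I)
      - (∫ x : ℝ in a..b, ((x : ℂ) + d * Complex.I) * deriv f ((x : ℂ) + d * Complex.I) /
          (f ((x : ℂ) + d * Complex.I) - z))
      - (∫ y : ℝ in c..d, ((a : ℂ) + y * Complex.I) * deriv f ((a : ℂ) + y * Complex.I) /
          (f ((a : ℂ) + y * Complex.I) - z) * Complex.I)
      = wn * (2 * Real.pi * Complex.I) := by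
  obtain ⟨hwre, hwim⟩ := Complex.mem_reProdIm.mp hwn
  set Q : Set ℂ := Set.Icc a b ×ℂ Set.Icc c d with hQ
  have hab : a < b := lt_trans hwre.1 hwre.2
  have hcd : c < d := lt_trans hwim.1 hwim.2
  have hwnQ : wn ∈ Q := Complex.mem_reProdIm.mpr
    ⟨Ioo_subset_Icc_self hwre, Ioo_subset_Icc_self hwim⟩
  have hwnU : wn ∈ U := hQU hwnQ
  -- the dslope function k
  set k : ℂ → ℂ := dslope f wn with hk
  have hkdiff : DifferentiableOn ℂ k U :=
    (differentiableOn_dslope (hU.mem_nhds hwnU)).mpr hf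
  have hfact : ∀ ζ : ℂ, f ζ - z = (ζ - wn) * k ζ := by
    intro ζ
    have h1 := sub_smul_dslope f wn ζ
    rw [smul_eq_mul] at h1
    rw [← hfwn]
    exact h1.symm
  have hkQ : ∀ ζ ∈ Q, k ζ ≠ 0 := by
    intro ζ hζ
    rcases eq_or_ne ζ wn with rfl | hne
    · rw [hk, dslope_same]; exact hderiv
    · rw [hk, dslope_of_ne f hne, slope_def_field]
      apply div_ne_zero
      · exact sub_ne_zero.mpr fun h => hne (hinj hζ hwnQ h)
      · exact sub_ne_zero.mpr hne
  -- open neighborhood V of Q on which k ≠ 0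
  set V : Set ℂ := {ζ | ζ ∈ U ∧ k ζ ≠ 0} with hV
  have hVopen : IsOpen V := by
    rw [isOpen_iff_mem_nhds]
    rintro ζ ⟨hζU, hζk⟩
    have hcont : ContinuousAt k ζ := (hkdiff.differentiableAt (hU.mem_nhds hζU)).continuousAt
    filter_upwards [hU.mem_nhds hζU, hcont.eventually_ne hζk] with x h1 h2 using ⟨h1, h2⟩
  have hQV : Q ⊆ V := fun ζ hζ => ⟨hQU hζ, hkQ ζ hζ⟩
  have hkderiv : DifferentiableOn ℂ (deriv k) U :=
    ((hkdiff.analyticOnNhd hU).deriv).differentiableOn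
  -- the auxiliary holomorphic function g
  set g : ℂ → ℂ := fun ζ => 1 + ζ * deriv k ζ / k ζ with hg
  have hgdiff : DifferentiableOn ℂ g V := by
    apply (differentiableOn_const _).add
    exact DifferentiableOn.div
      (differentiableOn_id.mul (hkderiv.mono fun ζ hζ => hζ.1))
      (hkdiff.mono fun ζ hζ => hζ.1) (fun ζ hζ => hζ.2)
  -- derivative identity
  have hderiv_eq : ∀ ζ ∈ U, deriv f ζ = k ζ + (ζ - wn) * deriv k ζ := by
    intro ζ hζ
    have hfun : f = fun ξ => z + (ξ - wn) * k ξ := by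
      funext ξ
      have := hfact ξ
      linear_combination this
    have hkd : HasDerivAt k (deriv k ζ) ζ :=
      (hkdiff.differentiableAt (hU.mem_nhds hζ)).hasDerivAt
    have hsub : HasDerivAt (fun ξ : ℂ => ξ - wn) (1 - 0) ζ :=
      HasDerivAt.sub (hasDerivAt_id ζ) (hasDerivAt_const ζ wn)
    rw [sub_zero] at hsub
    have hprod : HasDerivAt (fun ξ => z + (ξ - wn) * k ξ)
        (1 * k ζ + (ζ - wn) * deriv k ζ) ζ :=
      HasDerivAt.const_add z (HasDerivAt.mul hsub hkd)
    conv_lhs => rw [hfun]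
    rw [hprod.deriv]
    ring
  -- pointwise identity for the boundary integrand
  have hptwise : ∀ ζ ∈ Q, ζ ≠ wn →
      ζ * deriv f ζ / (f ζ - z) = g ζ + wn * (ζ - wn)⁻¹ := by
    intro ζ hζ hne
    have h1 : f ζ - z = (ζ - wn) * k ζ := hfact ζ
    have h2 : deriv f ζ = k ζ + (ζ - wn) * deriv k ζ := hderiv_eq ζ (hQU hζ)
    have h3 : k ζ ≠ 0 := hkQ ζ hζ
    have h4 : ζ - wn ≠ 0 := sub_ne_zero.mpr hne
    rw [h1, h2]
    simp only [hg]
    field_simp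
    ring
  -- generic side computation
  have hside : ∀ (sf : ℝ → ℂ) (lo hi : ℝ), (∀ t ∈ Set.uIcc lo hi, sf t ∈ Q ∧ sf t ≠ wn) →
      Continuous sf →
      (∫ t in lo..hi, sf t * deriv f (sf t) / (f (sf t) - z))
        = (∫ t in lo..hi, g (sf t)) + wn * ∫ t in lo..hi, (sf t - wn)⁻¹ := by
    intro sf lo hi hmem hcont
    have hcg : ContinuousOn (fun t => g (sf t)) (Set.uIcc lo hi) :=
      (hgdiff.mono hQV).continuousOn.comp hcont.continuousOn fun t ht => (hmem t ht).1
    have hci : ContinuousOn (fun t => wn * (sf t - wn)⁻¹) (Set.uIcc lo hi) :=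
      continuousOn_const.mul ((hcont.continuousOn.sub continuousOn_const).inv₀
        fun t ht => sub_ne_zero.mpr (hmem t ht).2)
    rw [← intervalIntegral.integral_const_mul,
      ← intervalIntegral.integral_add hcg.intervalIntegrable hci.intervalIntegrable]
    apply intervalIntegral.integral_congr
    intro t ht
    exact hptwise (sf t) (hmem t ht).1 (hmem t ht).2
  -- membership facts for the four sides
  have hmemQ : ∀ (x y : ℝ), x ∈ Set.Icc a b → y ∈ Set.Icc c d → ((x:ℂ) + (y:ℂ)*Complex.I) ∈ Q := by
    intro x y hx hy
    rw [hQ, Complex.mem_reProdIm]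
    constructor
    · simpa using hx
    · simpa using hy
  have hneim : ∀ (x y : ℝ), y ≠ wn.im → ((x:ℂ) + (y:ℂ)*Complex.I) ≠ wn := by
    intro x y hy h0
    apply hy
    have := congrArg Complex.im h0
    simpa using this
  have hnere : ∀ (x y : ℝ), x ≠ wn.re → ((x:ℂ) + (y:ℂ)*Complex.I) ≠ wn := by
    intro x y hx h0
    apply hx
    have := congrArg Complex.re h0
    simpa using this
  -- the four sides
  have hbot := hside (fun x : ℝ => (x:ℂ) + (c:ℂ)*Complex.I) a b
    (by
      intro t ht
      rw [Set.uIcc_of_le hab.le] at ht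
      exact ⟨hmemQ t c ht (Set.left_mem_Icc.mpr hcd.le), hneim t c (ne_of_lt hwim.1)⟩)
    (Complex.continuous_ofReal.add continuous_const)
  have htop := hside (fun x : ℝ => (x:ℂ) + (d:ℂ)*Complex.I) a b
    (by
      intro t ht
      rw [Set.uIcc_of_le hab.le] at ht
      exact ⟨hmemQ t d ht (Set.right_mem_Icc.mpr hcd.le), hneim t d (ne_of_gt hwim.2)⟩)
    (Complex.continuous_ofReal.add continuous_const)
  have hright := hside (fun y : ℝ => (b:ℂ) + (y:ℂ)*Complex.I) c d
    (by
      intro t ht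
      rw [Set.uIcc_of_le hcd.le] at ht
      exact ⟨hmemQ b t (Set.right_mem_Icc.mpr hab.le) ht, hnere b t (ne_of_gt hwre.2)⟩)
    (continuous_const.add (Complex.continuous_ofReal.mul continuous_const))
  have hleft := hside (fun y : ℝ => (a:ℂ) + (y:ℂ)*Complex.I) c d
    (by
      intro t ht
      rw [Set.uIcc_of_le hcd.le] at ht
      exact ⟨hmemQ a t (Set.left_mem_Icc.mpr hab.le) ht, hnere a t (ne_of_lt hwre.1)⟩)
    (continuous_const.add (Complex.continuous_ofReal.mul continuous_const))
  -- Cauchy-Goursat for g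
  have hre1 : ((a:ℂ) + (c:ℂ)*Complex.I).re = a := by simp
  have him1 : ((a:ℂ) + (c:ℂ)*Complex.I).im = c := by simp
  have hre2 : ((b:ℂ) + (d:ℂ)*Complex.I).re = b := by simp
  have him2 : ((b:ℂ) + (d:ℂ)*Complex.I).im = d := by simp
  have hrect : Set.uIcc ((a:ℂ) + (c:ℂ)*Complex.I).re ((b:ℂ) + (d:ℂ)*Complex.I).re ×ℂ
      Set.uIcc ((a:ℂ) + (c:ℂ)*Complex.I).im ((b:ℂ) + (d:ℂ)*Complex.I).im = Q := by
    rw [hre1, him1, hre2, him2, Set.uIcc_of_le hab.le, Set.uIcc_of_le hcd.le]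
  have hG := Complex.integral_boundary_rect_eq_zero_of_differentiableOn g
    ((a:ℂ) + (c:ℂ)*Complex.I) ((b:ℂ) + (d:ℂ)*Complex.I)
    (by rw [hrect]; exact hgdiff.mono hQV)
  simp only [hre1, him1, hre2, him2, smul_eq_mul] at hG
  -- winding number integral
  have hA := rect_winding hwre.1 hwre.2 hwim.1 hwim.2
  -- put everything together
  rw [intervalIntegral.integral_mul_const, intervalIntegral.integral_mul_const, hbot, htop,
    hright, hleft]
  linear_combination hG + wn * hA


/-- Cauchy integral formula for the inverse: if `Hₙ → H` uniformly near a closed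
rectangle `Q ⊂ ℍ` on which the holomorphic functions `Hₙ` are injective with
`Fₙ ∘ Hₙ = id`, and `z ∈ H(int Q)`, then for large `n`,
`Fₙ(z) = (1/2πi) ∮_{∂Q} ζ Hₙ′(ζ)/(Hₙ(ζ)−z) dζ`. -/
theorem stmt17 (a b c d : ℝ) (hab : a < b) (hc : 0 < c) (hcd : c < d)
    (Q : Set ℂ) (hQ : Q = {z : ℂ | z.re ∈ Set.Icc a b ∧ z.im ∈ Set.Icc c d})
    (U : Set ℂ) (hU : IsOpen U) (hQU : Q ⊆ U)
    (H : ℂ → ℂ) (Hn : ℕ → ℂ → ℂ)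
    (hHhol : DifferentiableOn ℂ H U) (hHnhol : ∀ n, DifferentiableOn ℂ (Hn n) U)
    (hHinj : Set.InjOn H Q) (hHninj : ∀ n, Set.InjOn (Hn n) Q)
    (hHconv : TendstoUniformlyOn Hn H Filter.atTop U)
    (F : ℕ → ℂ → ℂ)
    (hinv : ∀ n, ∀ w ∈ Q, F n (Hn n w) = w)
    (Fl : ℂ → ℂ)
    (hFconv : TendstoUniformlyOn F Fl Filter.atTop (H '' (frontier Q)))
    (z : ℂ) (hz : z ∈ H '' (interior Q)) :
    ∃ N : ℕ, ∀ n ≥ N,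
      F n z = (2 * Real.pi * Complex.I)⁻¹ *
        ((∫ x : ℝ in a..b, ((x : ℂ) + c * Complex.I) *
            deriv (Hn n) ((x : ℂ) + c * Complex.I) /
            (Hn n ((x : ℂ) + c * Complex.I) - z))
          + (∫ y : ℝ in c..d, ((b : ℂ) + y * Complex.I) *
              deriv (Hn n) ((b : ℂ) + y * Complex.I) /
              (Hn n ((b : ℂ) + y * Complex.I) - z) * Complex.I)
          - (∫ x : ℝ in a..b, ((x : ℂ) + d * Complex.I) *
              deriv (Hn n) ((x : ℂ) + d * Complex.I) /
              (Hn n ((x : ℂ) + d * Complex.I) - z))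
          - (∫ y : ℝ in c..d, ((a : ℂ) + y * Complex.I) *
              deriv (Hn n) ((a : ℂ) + y * Complex.I) /
              (Hn n ((a : ℂ) + y * Complex.I) - z) * Complex.I)) := by
  obtain ⟨w₀, hw₀, hHw₀⟩ := hz
  have hQc : Q = Set.Icc a b ×ℂ Set.Icc c d := by
    rw [hQ]; ext ζ; simp [Complex.mem_reProdIm]
  have hQint : interior Q = Set.Ioo a b ×ℂ Set.Ioo c d := by
    rw [hQc, Complex.interior_reProdIm, interior_Icc, interior_Icc]
  have hIntU : interior Q ⊆ U := interior_subset.trans hQU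
  obtain ⟨r₀, hr₀, hball⟩ := Metric.isOpen_iff.mp isOpen_interior w₀ hw₀
  set r := r₀ / 2 with hrdef
  have hr : 0 < r := by positivity
  have hcb : closedBall w₀ r ⊆ interior Q :=
    (closedBall_subset_ball (by rw [hrdef]; linarith)).trans hball
  have hsub : sphere w₀ r ⊆ Q := fun ζ hζ =>
    interior_subset (hcb (sphere_subset_closedBall hζ))
  have hHcont : ContinuousOn H U := hHhol.continuousOn
  obtain ⟨ζ₀, hζ₀, hmin⟩ := (isCompact_sphere w₀ r).exists_isMinOn
    (NormedSpace.sphere_nonempty.mpr hr.le)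
    (((hHcont.mono (hsub.trans hQU)).sub continuousOn_const).norm)
  set m₀ := ‖H ζ₀ - z‖ with hm₀def
  have hm₀ : 0 < m₀ := by
    rw [hm₀def, norm_pos_iff, sub_ne_zero]
    intro h0
    have hζQ : ζ₀ ∈ Q := hsub hζ₀
    have hζw : ζ₀ = w₀ := hHinj hζQ (interior_subset hw₀) (by rw [h0, hHw₀])
    have hds := Metric.mem_sphere.mp hζ₀
    rw [hζw, dist_self] at hds
    exact hr.ne hds
  have hev := Metric.tendstoUniformlyOn_iff.mp hHconv (m₀/4) (by positivity)
  obtain ⟨N, hN⟩ := Filter.eventually_atTop.mp hev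
  refine ⟨N, fun n hn => ?_⟩
  have hclose : ∀ x ∈ U, dist (H x) (Hn n x) < m₀/4 := hN n hn
  -- existence of a preimage wn of z in the interior
  have hdc : DiffContOnCl ℂ (Hn n) (ball w₀ r) := DifferentiableOn.diffContOnCl (by
    rw [closure_ball w₀ hr.ne']
    exact (hHnhol n).mono (hcb.trans hIntU))
  have hsp : ∀ ζ ∈ sphere w₀ r, m₀/2 ≤ ‖Hn n ζ - Hn n w₀‖ := by
    intro ζ hζ
    have h1 : m₀ ≤ ‖H ζ - z‖ := hmin hζ
    have h2 : dist (H ζ) (Hn n ζ) < m₀/4 := hclose ζ (hQU (hsub hζ))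
    have h3 : dist (H w₀) (Hn n w₀) < m₀/4 := hclose w₀ (hIntU hw₀)
    have h4 : dist (H ζ) (H w₀) ≤
        dist (H ζ) (Hn n ζ) + dist (Hn n ζ) (Hn n w₀) + dist (Hn n w₀) (H w₀) :=
      dist_triangle4 _ _ _ _
    have h5 : dist (H ζ) (H w₀) = ‖H ζ - z‖ := by rw [hHw₀, dist_eq_norm]
    have h6 : dist (Hn n ζ) (Hn n w₀) = ‖Hn n ζ - Hn n w₀‖ := dist_eq_norm _ _
    have h7 : dist (Hn n w₀) (H w₀) = dist (H w₀) (Hn n w₀) := dist_comm _ _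
    linarith
  have hfreq : ∃ᶠ ζ in 𝓝 w₀, Hn n ζ ≠ Hn n w₀ := by
    have hball' : ∀ᶠ ζ in 𝓝 w₀, ζ ∈ ball w₀ r := isOpen_ball.eventually_mem (mem_ball_self hr)
    have hfr : ∀ᶠ ζ in 𝓝[≠] w₀, Hn n ζ ≠ Hn n w₀ := by
      filter_upwards [hball'.filter_mono nhdsWithin_le_nhds, eventually_mem_nhdsWithin]
        with ζ h1 h2
      intro h0
      exact h2 (hHninj n (interior_subset (hcb (ball_subset_closedBall h1)))
        (interior_subset hw₀) h0)
    exact hfr.frequently.filter_mono nhdsWithin_le_nhds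
  have himg := hdc.ball_subset_image_closedBall hr hsp hfreq
  have hzball : z ∈ ball (Hn n w₀) (m₀/2/2) := by
    rw [mem_ball]
    have : dist (H w₀) (Hn n w₀) < m₀/4 := hclose w₀ (hIntU hw₀)
    rw [hHw₀] at this
    linarith
  obtain ⟨wn, hwncb, hwneq⟩ := himg hzball
  have hwnint : wn ∈ interior Q := hcb hwncb
  -- nonvanishing derivative
  have hd0 : deriv (Hn n) wn ≠ 0 :=
    deriv_ne_zero_of_injOn isOpen_interior ((hHnhol n).mono hIntU)
      ((hHninj n).mono interior_subset) hwnint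
  -- contour integral evaluation
  have hQU' : Set.Icc a b ×ℂ Set.Icc c d ⊆ U := by rw [← hQc]; exact hQU
  have hinj' : Set.InjOn (Hn n) (Set.Icc a b ×ℂ Set.Icc c d) := by
    rw [← hQc]; exact hHninj n
  have hwn' : wn ∈ Set.Ioo a b ×ℂ Set.Ioo c d := by rw [← hQint]; exact hwnint
  have hcon := contour_eval hU hQU' (hHnhol n) hinj' hwn' hwneq hd0
  have hFz : F n z = wn := by rw [← hwneq]; exact hinv n wn (interior_subset hwnint)
  rw [hFz, hcon]
  have hne : (2 * (Real.pi:ℂ) * Complex.I) ≠ 0 := by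
    simp [Real.pi_ne_zero, Complex.I_ne_zero, Complex.ofReal_ne_zero]
  field_simp
end
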